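/- For m = 3: the depth of every word w = s_1⋯s_n of Hanoi automaton states satisfies d(w) ≤ ⌈log₂ n⌉ + 1; that is, for every input word v there exists a word u of length at most ⌈log₂ n⌉ + 1 with w|_v = w|_u. -/

import Mathlib

/-!
In `H_3` a state `s ≠ e` survives the section at a letter `y` exactly when `y` is the letter
that `s` fixes, and then lets `y` through; otherwise it dies and sends out a letter it does
not fix. Reading a word of states from the right, a maximal run of equal states (a block)
therefore survives or dies as a whole, and the block after a surviving one, which fixes a
different letter, dies. So a letter at which the section changes the word leaves at most
`⌈r/2⌉` of its `r` blocks, and fewer than `r`; the other letters of `v` can be dropped. After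
`⌈log₂ r⌉ + 1` effective letters no block is left, and `r ≤ n`.
-/

/-- States of the Hanoi automaton: the identity state `e` and a state `a i j`
for each transposition `(i j)`. -/
inductive HState where
  | e : HState
  | a : ℕ → ℕ → HState
deriving DecidableEq

/-- Output function: `a i j` swaps the letters `i` and `j`. -/
def HState.out : HState → ℕ → ℕ
  | .e, x => x
  | .a i j, x => if x = i then j else if x = j then i else x

/-- Transition (section) function: `a i j` goes to `e` on letters `i`, `j`
and stays put otherwise. -/
def HState.sec : HState → ℕ → HState
  | .e, _ => .e
  | .a i j, x => if x = i ∨ x = j then .e else .a i j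

/-- Action of a word of states on a letter: `(s₁⋯sₙ)(x) = s₁(s₂(⋯sₙ(x)))`. -/
def wordOut : List HState → ℕ → ℕ
  | [], x => x
  | s :: w, x => s.out (wordOut w x)

/-- Section of a word of states at a letter: `s'ᵢ = sᵢ|_{(sᵢ₊₁⋯sₙ)(x)}`. -/
def wordSec : List HState → ℕ → List HState
  | [], _ => []
  | s :: w, x => s.sec (wordOut w x) :: wordSec w x

/-- Action of a word of states on a word of letters. -/
def wordAct : List HState → List ℕ → List ℕ
  | _, [] => []
  | w, x :: v => wordOut w x :: wordAct (wordSec w x) v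

/-- Section of a word of states at a word of letters. -/
def wordSecW : List HState → List ℕ → List HState
  | w, [] => w
  | w, x :: v => wordSecW (wordSec w x) v

/-- A state of the Hanoi automaton `H_m`: either `e` or `a i j` with
`1 ≤ i < j ≤ m` (one state per transposition of `{1,…,m}`). -/
def IsHanoiState (m : ℕ) (s : HState) : Prop :=
  s = HState.e ∨ ∃ i j, s = HState.a i j ∧ 1 ≤ i ∧ i < j ∧ j ≤ m

lemma Nat.clog_mul_base {b n : ℕ} (hb : 1 < b) (hn : n ≠ 0) :
    Nat.clog b (n * b) = Nat.clog b n + 1 := by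
  rw [Nat.clog_of_two_le hb (by nlinarith [Nat.pos_of_ne_zero hn]), Nat.add_sub_assoc hb.le,
    mul_comm, Nat.mul_add_div (by omega), Nat.div_eq_of_lt (by omega), add_zero]

lemma Nat.clog_mul_two_add_one_le {r r' : ℕ} (h : 2 * r' ≤ r + 1) (hlt : r' < r) :
    Nat.clog 2 (r' * 2) + 1 ≤ Nat.clog 2 (r * 2) := by
  rcases Nat.eq_zero_or_pos r' with rfl | hr'
  · rw [Nat.zero_mul, Nat.clog_zero_right]
    exact Nat.clog_pos one_lt_two (by omega)
  · rw [Nat.clog_mul_base one_lt_two hr'.ne', Nat.clog_mul_base one_lt_two (by omega),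
      Nat.clog_of_two_le (n := r) one_lt_two (by omega)]
    gcongr
    omega

namespace HState

/-- For a transposition state `a i j` of `H_3`, the letter it fixes; `s|_y = s` exactly when
`y = s.fixedLetter`. The value `0` at `e` lies outside the alphabet. -/
def fixedLetter : HState → ℕ
  | e => 0
  | a i j => 6 - i - j

lemma isHanoiState_three_iff {s : HState} :
    IsHanoiState 3 s ↔ s = e ∨ s = a 1 2 ∨ s = a 1 3 ∨ s = a 2 3 := by
  constructor
  · rintro (rfl | ⟨i, j, rfl, hi, hij, hj⟩)
    · exact Or.inl rfl
    · have : i ≤ 2 := by omega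
      interval_cases i <;> interval_cases j <;> simp
  · rintro (rfl | rfl | rfl | rfl)
    · exact Or.inl rfl
    all_goals exact Or.inr ⟨_, _, rfl, by norm_num, by norm_num, by norm_num⟩

lemma fixedLetter_injOn : Set.InjOn fixedLetter {s | IsHanoiState 3 s} := by
  intro s hs t ht h
  rcases isHanoiState_three_iff.mp hs with rfl | rfl | rfl | rfl <;>
    rcases isHanoiState_three_iff.mp ht with rfl | rfl | rfl | rfl <;> revert h <;> decide

lemma sec_eq_self_or_eq_e (s : HState) (y : ℕ) : s.sec y = s ∨ s.sec y = e := by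
  cases s with
  | e => exact Or.inl rfl
  | a i j => by_cases h : y = i ∨ y = j <;> simp [HState.sec, h]

variable {s : HState} (hs : IsHanoiState 3 s)
include hs

lemma out_mem_Icc {y : ℕ} (hy : y ∈ Finset.Icc 1 3) : s.out y ∈ Finset.Icc 1 3 := by
  rw [Finset.mem_Icc] at hy ⊢
  obtain ⟨h1, h3⟩ := hy
  rcases isHanoiState_three_iff.mp hs with rfl | rfl | rfl | rfl <;> interval_cases y <;> decide

lemma out_fixedLetter : s.out s.fixedLetter = s.fixedLetter := by
  rcases isHanoiState_three_iff.mp hs with rfl | rfl | rfl | rfl <;> decide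

lemma sec_fixedLetter : s.sec s.fixedLetter = s := by
  rcases isHanoiState_three_iff.mp hs with rfl | rfl | rfl | rfl <;> decide

lemma sec_of_ne_fixedLetter {y : ℕ} (hy : y ∈ Finset.Icc 1 3) (h : y ≠ s.fixedLetter) :
    s.sec y = e := by
  rw [Finset.mem_Icc] at hy
  obtain ⟨h1, h3⟩ := hy
  rcases isHanoiState_three_iff.mp hs with rfl | rfl | rfl | rfl <;> interval_cases y <;>
    revert h <;> decide

lemma out_ne_fixedLetter {y : ℕ} (hy : y ∈ Finset.Icc 1 3) (h : y ≠ s.fixedLetter) :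
    s.out y ≠ s.fixedLetter := by
  rw [Finset.mem_Icc] at hy
  obtain ⟨h1, h3⟩ := hy
  rcases isHanoiState_three_iff.mp hs with rfl | rfl | rfl | rfl <;> interval_cases y <;>
    revert h <;> decide

end HState

open HState

lemma mem_wordSec {w : List HState} {x : ℕ} {s : HState} (h : s ∈ wordSec w x) :
    s = e ∨ s ∈ w := by
  induction w with
  | nil => simp [wordSec] at h
  | cons t w ih =>
    rcases List.mem_cons.mp h with rfl | h
    · exact (sec_eq_self_or_eq_e t _).symm.imp_right fun h => by rw [h]; exact List.mem_cons_self
    · exact (ih h).imp_right (List.mem_cons_of_mem t)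

lemma isHanoiState_of_mem_wordSec {w : List HState} (hw : ∀ s ∈ w, IsHanoiState 3 s) (x : ℕ) :
    ∀ s ∈ wordSec w x, IsHanoiState 3 s := fun _ h =>
  (mem_wordSec h).elim (fun h => Or.inl h) (hw _)

lemma wordOut_mem_Icc {w : List HState} (hw : ∀ s ∈ w, IsHanoiState 3 s) {x : ℕ}
    (hx : x ∈ Finset.Icc 1 3) : wordOut w x ∈ Finset.Icc 1 3 := by
  induction w with
  | nil => exact hx
  | cons s w ih =>
    exact out_mem_Icc (hw s List.mem_cons_self) (ih fun t ht => hw t (List.mem_cons_of_mem s ht))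

/-- The labels of the maximal runs of equal states of a word, once the `e`'s are deleted. -/
def blocks : List HState → List HState
  | [] => []
  | s :: w => if s = e ∨ (blocks w).head? = some s then blocks w else s :: blocks w

@[simp]
lemma blocks_cons_e (w : List HState) : blocks (e :: w) = blocks w := by
  simp [blocks]

lemma blocks_cons_of_head? {s : HState} {w : List HState} (h : (blocks w).head? = some s) :
    blocks (s :: w) = blocks w := by
  simp [blocks, h]

lemma blocks_cons_of_head?_ne {s : HState} (hs : s ≠ e) {w : List HState}
    (h : (blocks w).head? ≠ some s) : blocks (s :: w) = s :: blocks w := by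
  simp [blocks, hs, h]

lemma head?_blocks_cons {s : HState} (hs : s ≠ e) (w : List HState) :
    (blocks (s :: w)).head? = some s := by
  by_cases h : (blocks w).head? = some s
  · rwa [blocks_cons_of_head? h]
  · rw [blocks_cons_of_head?_ne hs h, List.head?_cons]

lemma length_blocks_cons_le (s : HState) (w : List HState) :
    (blocks (s :: w)).length ≤ (blocks w).length + 1 := by
  by_cases h : s = e ∨ (blocks w).head? = some s <;> simp [blocks, h]

lemma length_blocks_le (w : List HState) : (blocks w).length ≤ w.length := by
  induction w with
  | nil => rfl
  | cons s w ih => exact (length_blocks_cons_le s w).trans (by simpa using ih)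

lemma mem_of_mem_blocks {b : HState} {w : List HState} (h : b ∈ blocks w) : b ∈ w := by
  induction w with
  | nil => simp [blocks] at h
  | cons s w ih =>
    unfold blocks at h
    split_ifs at h
    · exact List.mem_cons_of_mem s (ih h)
    · rcases List.mem_cons.mp h with rfl | h
      · exact List.mem_cons_self
      · exact List.mem_cons_of_mem s (ih h)

/-- The leftmost block of `w` survives the section at `x` exactly when the output letter is the
one it fixes; the fields refer to its survival in this form. -/
structure BlocksShrink (w : List HState) (x : ℕ) : Prop where
  two_mul_le_succ : 2 * (blocks (wordSec w x)).length ≤ (blocks w).length + 1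
  two_mul_le_of_ne : (∀ b ∈ (blocks w).head?, wordOut w x ≠ b.fixedLetter) →
    2 * (blocks (wordSec w x)).length ≤ (blocks w).length
  head?_of_eq : ∀ b ∈ (blocks w).head?, wordOut w x = b.fixedLetter →
    (blocks (wordSec w x)).head? = some b
  lt_of_ne : wordSec w x ≠ w → (blocks (wordSec w x)).length < (blocks w).length

namespace BlocksShrink

variable {t : List HState} {x : ℕ} (ht : BlocksShrink t x)
include ht

lemma cons_e : BlocksShrink (e :: t) x := by
  have hsec : wordSec (e :: t) x = e :: wordSec t x := rfl
  have hout : wordOut (e :: t) x = wordOut t x := rfl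
  refine ⟨?_, ?_, ?_, ?_⟩ <;> simp only [hsec, hout, blocks_cons_e]
  exacts [ht.two_mul_le_succ, ht.two_mul_le_of_ne, ht.head?_of_eq,
    fun h => ht.lt_of_ne (mt (congrArg (e :: ·)) h)]

lemma cons_of_eq_fixedLetter {s : HState} (hs : IsHanoiState 3 s) (hse : s ≠ e)
    (hst : ∀ b ∈ (blocks t).head?, IsHanoiState 3 b) (hy : wordOut t x = s.fixedLetter) :
    BlocksShrink (s :: t) x := by
  have hsec : wordSec (s :: t) x = s :: wordSec t x := by
    change s.sec (wordOut t x) :: _ = _; rw [hy, sec_fixedLetter hs]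
  have hout : wordOut (s :: t) x = s.fixedLetter := by
    change s.out (wordOut t x) = _; rw [hy, out_fixedLetter hs]
  have htail_ne : s :: wordSec t x ≠ s :: t → wordSec t x ≠ t := mt (congrArg (s :: ·))
  by_cases hb : (blocks t).head? = some s
  · have hb' := ht.head?_of_eq s hb hy
    refine ⟨?_, ?_, ?_, ?_⟩ <;>
      simp only [hsec, hout, blocks_cons_of_head? hb, blocks_cons_of_head? hb']
    exacts [ht.two_mul_le_succ, hy ▸ ht.two_mul_le_of_ne, hy ▸ ht.head?_of_eq,
      fun h => ht.lt_of_ne (htail_ne h)]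
  · have hb_ne : ∀ b ∈ (blocks t).head?, wordOut t x ≠ b.fixedLetter := by
      intro b hbt hyb
      rw [Option.mem_def.mp hbt, fixedLetter_injOn (hst b hbt) hs (hyb.symm.trans hy)] at hb
      exact hb rfl
    have hlen := ht.two_mul_le_of_ne hb_ne
    have hcons := length_blocks_cons_le s (wordSec t x)
    refine ⟨?_, ?_, ?_, ?_⟩ <;>
      simp only [hsec, hout, blocks_cons_of_head?_ne hse hb, List.length_cons]
    · omega
    · exact fun h => absurd rfl (h s rfl)
    · rintro b ⟨⟩ -
      exact head?_blocks_cons hse _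
    · intro h
      have := ht.lt_of_ne (htail_ne h)
      omega

lemma cons_of_ne_fixedLetter {s : HState} (hs : IsHanoiState 3 s) (hse : s ≠ e)
    (hy₀ : wordOut t x ∈ Finset.Icc 1 3) (hy : wordOut t x ≠ s.fixedLetter) :
    BlocksShrink (s :: t) x := by
  have hsec : wordSec (s :: t) x = e :: wordSec t x := by
    change s.sec (wordOut t x) :: _ = _; rw [sec_of_ne_fixedLetter hs hy₀ hy]
  have hout : wordOut (s :: t) x ≠ s.fixedLetter := out_ne_fixedLetter hs hy₀ hy
  have hhead := head?_blocks_cons hse t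
  suffices h : 2 * (blocks (wordSec t x)).length ≤ (blocks (s :: t)).length ∧
      (blocks (wordSec t x)).length < (blocks (s :: t)).length by
    refine ⟨?_, fun _ => ?_, ?_, fun _ => ?_⟩ <;> simp only [hsec, blocks_cons_e, hhead]
    · omega
    · exact h.1
    · rintro b ⟨⟩ h'
      exact absurd h' hout
    · exact h.2
  by_cases hb : (blocks t).head? = some s
  · rw [blocks_cons_of_head? hb]
    have hlen := ht.two_mul_le_of_ne (by rw [hb]; rintro b ⟨⟩; exact hy)
    have hpos : 0 < (blocks t).length := List.length_pos_iff.mpr (by rintro h; simp [h] at hb)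
    omega
  · rw [blocks_cons_of_head?_ne hse hb, List.length_cons]
    have := ht.two_mul_le_succ
    omega

end BlocksShrink

lemma blocksShrink {w : List HState} (hw : ∀ s ∈ w, IsHanoiState 3 s) {x : ℕ}
    (hx : x ∈ Finset.Icc 1 3) : BlocksShrink w x := by
  induction w with
  | nil => exact ⟨by simp [wordSec, blocks], by simp [wordSec, blocks], by simp [blocks],
      fun h => absurd rfl h⟩
  | cons s t ih =>
    have ht : ∀ b ∈ t, IsHanoiState 3 b := fun b hb => hw b (List.mem_cons_of_mem s hb)
    have hs := hw s List.mem_cons_self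
    by_cases hse : s = e
    · exact hse ▸ (ih ht).cons_e
    by_cases hy : wordOut t x = s.fixedLetter
    · exact (ih ht).cons_of_eq_fixedLetter hs hse
        (fun b hb => ht b (mem_of_mem_blocks (List.mem_of_mem_head? hb))) hy
    · exact (ih ht).cons_of_ne_fixedLetter hs hse (wordOut_mem_Icc ht hx) hy

lemma exists_wordSecW_eq_length_le_clog_blocks {w : List HState}
    (hw : ∀ s ∈ w, IsHanoiState 3 s) {v : List ℕ} (hv : ∀ y ∈ v, y ∈ Finset.Icc 1 3) :
    ∃ u : List ℕ, (∀ y ∈ u, y ∈ Finset.Icc 1 3) ∧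
      u.length ≤ Nat.clog 2 ((blocks w).length * 2) ∧ wordSecW w v = wordSecW w u := by
  induction v generalizing w with
  | nil => exact ⟨[], by simp, by simp, rfl⟩
  | cons x v ih =>
    have hx := hv x List.mem_cons_self
    obtain ⟨u, hu, hlen, heq⟩ := ih (isHanoiState_of_mem_wordSec hw x)
      (fun y hy => hv y (List.mem_cons_of_mem x hy))
    have hstep : wordSecW w (x :: v) = wordSecW (wordSec w x) v := rfl
    by_cases hfix : wordSec w x = w
    · exact ⟨u, hu, hfix ▸ hlen, by rw [hstep, heq, hfix]⟩
    · refine ⟨x :: u, ?_, ?_, by rw [hstep, heq]; rfl⟩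
      · exact fun y hy => (List.mem_cons.mp hy).elim (· ▸ hx) (hu y)
      · exact (Nat.add_le_add_right hlen 1).trans (Nat.clog_mul_two_add_one_le
          (blocksShrink hw hx).two_mul_le_succ ((blocksShrink hw hx).lt_of_ne hfix))

/-- For `m = 3`: every word of `n` Hanoi states has depth at most `⌈log₂ n⌉ + 1`:
every section equals a section at a word of length at most `⌈log₂ n⌉ + 1`. -/
theorem hanoi3_depth (n : ℕ) (hn : 1 ≤ n) (w : List HState) (hlen : w.length = n)
    (hw : ∀ s ∈ w, IsHanoiState 3 s)
    (v : List ℕ) (hv : ∀ y ∈ v, y ∈ Finset.Icc 1 3) :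
    ∃ u : List ℕ, (∀ y ∈ u, y ∈ Finset.Icc 1 3) ∧
      u.length ≤ Nat.clog 2 n + 1 ∧ wordSecW w v = wordSecW w u := by
  obtain ⟨u, hu, hulen, heq⟩ := exists_wordSecW_eq_length_le_clog_blocks hw hv
  refine ⟨u, hu, hulen.trans ?_, heq⟩
  calc Nat.clog 2 ((blocks w).length * 2) ≤ Nat.clog 2 (n * 2) :=
        Nat.clog_mono_right 2 (by have := length_blocks_le w; omega)
    _ = Nat.clog 2 n + 1 := Nat.clog_mul_base one_lt_two (by omega)
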